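/- Let p, q ≥ 0 with p + q ≤ 1. If (5p−3q)(5p+6q−5) ≤ 0, then for every density matrix ρ ∈ M₃(ℂ), H(N_{p,q}(ρ)) ≥ H(N_{p,q}(E₀₀)); if (5p−3q)(5p+6q−5) ≥ 0, then for every density matrix ρ ∈ M₃(ℂ), H(N_{p,q}(ρ)) ≥ H(N_{p,q}(E₁₁)). That is, the minimum output entropy of N_{p,q} is attained at E₀₀ in the first case and at E₁₁ in the second case. -/

import Mathlib

open Matrix BigOperators
open scoped Kronecker ComplexOrder

noncomputable section


/-- `Φ^{2→2}_2`. -/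
def Phi2 (A : Matrix (Fin 3) (Fin 3) ℂ) : Matrix (Fin 3) (Fin 3) ℂ :=
  (1 / 2 : ℂ) •
    !![A 0 0 + A 1 1, A 1 2, -(A 0 2);
       A 2 1, A 0 0 + A 2 2, A 0 1;
       -(A 2 0), A 1 0, A 1 1 + A 2 2]

/-- `Φ^{2→2}_4`. -/
def Phi4 (A : Matrix (Fin 3) (Fin 3) ℂ) : Matrix (Fin 3) (Fin 3) ℂ :=
  (1 / 10 : ℂ) •
    !![A 0 0 + 3 * A 1 1 + 6 * A 2 2, -2 * A 0 1 - 3 * A 1 2, A 0 2;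
       -2 * A 1 0 - 3 * A 2 1, 3 * A 0 0 + 4 * A 1 1 + 3 * A 2 2, -3 * A 0 1 - 2 * A 1 2;
       A 2 0, -3 * A 1 0 - 2 * A 2 1, 6 * A 0 0 + 3 * A 1 1 + A 2 2]

/-- `N_{p,q} = (1-p-q)Φ₀ + pΦ₂ + qΦ₄` (with `Φ₀ = id`). -/
def Nmap (p q : ℝ) (A : Matrix (Fin 3) (Fin 3) ℂ) : Matrix (Fin 3) (Fin 3) ℂ :=
  ((1 - p - q : ℝ) : ℂ) • A + ((p : ℝ) : ℂ) • Phi2 A + ((q : ℝ) : ℂ) • Phi4 A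

open Classical in
/-- von Neumann entropy `H(ρ) = -∑ λ_i log λ_i` (natural log), via the eigenvalues
of a Hermitian matrix (junk value `0` on non-Hermitian matrices). -/
noncomputable def vnEntropy {n : ℕ} (ρ : Matrix (Fin n) (Fin n) ℂ) : ℝ :=
  if h : ρ.IsHermitian then -∑ i, h.eigenvalues i * Real.log (h.eigenvalues i) else 0

/-! ### Auxiliary scalar lemmas (Schur concavity of entropy in dimension 3) -/

private lemma two_point {x y x' y' : ℝ} (hx0 : 0 ≤ x) (hxx' : x ≤ x') (hxy' : x ≤ y')
    (hsum : x + y = x' + y') :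
    Real.negMulLog x + Real.negMulLog y ≤ Real.negMulLog x' + Real.negMulLog y' := by
  have hx'y : x' ≤ y := by linarith
  have hy'y : y' ≤ y := by linarith
  rcases eq_or_lt_of_le (le_trans hxx' hx'y) with h | hlt
  · have hx' : x' = x := le_antisymm (by linarith) hxx'
    have hy' : y' = y := by linarith
    rw [hx', hy']
  · set t : ℝ := (y - x') / (y - x) with ht
    have hyx : 0 < y - x := by linarith
    have ht0 : 0 ≤ t := div_nonneg (by linarith) hyx.le
    have ht1 : t ≤ 1 := (div_le_one hyx).mpr (by linarith)
    have hs : t + (1 - t) = 1 := by ring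
    have hmemx : x ∈ Set.Ici (0:ℝ) := hx0
    have hmemy : y ∈ Set.Ici (0:ℝ) := by simp only [Set.mem_Ici]; linarith
    have h1 := Real.concaveOn_negMulLog.2 hmemx hmemy ht0 (by linarith) hs
    have h2 := Real.concaveOn_negMulLog.2 hmemx hmemy (by linarith : (0:ℝ) ≤ 1 - t) (by linarith)
      (by ring : (1 - t) + t = 1)
    have hx'eq : t • x + (1 - t) • y = x' := by
      rw [ht]
      simp only [smul_eq_mul]
      field_simp [hyx.ne']
      ring
    have hy'eq : (1 - t) • x + t • y = y' := by
      have : y' = x + y - x' := by linarith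
      rw [this, ht]
      simp only [smul_eq_mul]
      field_simp [hyx.ne']
      ring
    rw [hx'eq] at h1
    rw [hy'eq] at h2
    simp only [smul_eq_mul] at h1 h2
    nlinarith [h1, h2]

private lemma three_point_sorted {v1 v2 v3 x y z : ℝ} (h21 : v2 ≤ v1) (h32 : v3 ≤ v2)
    (h30 : 0 ≤ v3) (hxy : y ≤ x) (hyz : z ≤ y) (hxm : x ≤ v1) (hzm : v3 ≤ z)
    (hsum : x + y + z = v1 + v2 + v3) :
    Real.negMulLog v1 + Real.negMulLog v2 + Real.negMulLog v3 ≤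
      Real.negMulLog x + Real.negMulLog y + Real.negMulLog z := by
  rcases le_total v2 x with hc | hc
  · have s1 : Real.negMulLog v2 + Real.negMulLog v1 ≤
        Real.negMulLog (v1 + v2 - x) + Real.negMulLog x :=
      two_point (by linarith) (by linarith) hc (by ring)
    have s2 : Real.negMulLog v3 + Real.negMulLog (v1 + v2 - x) ≤
        Real.negMulLog z + Real.negMulLog y :=
      two_point h30 hzm (by linarith) (by linarith)
    linarith
  · have s1 : Real.negMulLog v3 + Real.negMulLog v2 ≤
        Real.negMulLog z + Real.negMulLog (v2 + v3 - z) :=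
      two_point h30 hzm (by linarith) (by ring)
    have s2 : Real.negMulLog (v2 + v3 - z) + Real.negMulLog v1 ≤
        Real.negMulLog y + Real.negMulLog x :=
      two_point (by linarith) (by linarith) (by linarith) (by linarith)
    linarith

private lemma three_point {v1 v2 v3 : ℝ} (u : Fin 3 → ℝ) (h21 : v2 ≤ v1) (h32 : v3 ≤ v2)
    (h30 : 0 ≤ v3) (hub : ∀ i, u i ≤ v1) (hlb : ∀ i, v3 ≤ u i)
    (hsum : ∑ i, u i = v1 + v2 + v3) :
    Real.negMulLog v1 + Real.negMulLog v2 + Real.negMulLog v3 ≤ ∑ i, Real.negMulLog (u i) := by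
  rw [Fin.sum_univ_three] at hsum ⊢
  have h0 := hub 0; have h1 := hub 1; have h2 := hub 2
  have l0 := hlb 0; have l1 := hlb 1; have l2 := hlb 2
  rcases le_total (u 0) (u 1) with h01 | h01
  · rcases le_total (u 1) (u 2) with h12 | h12
    · have := three_point_sorted h21 h32 h30 h12 h01 h2 l0 (by linarith); linarith
    · rcases le_total (u 0) (u 2) with h02 | h02
      · have := three_point_sorted h21 h32 h30 h12 h02 h1 l0 (by linarith); linarith
      · have := three_point_sorted h21 h32 h30 h01 h02 h1 l2 (by linarith); linarith
  · rcases le_total (u 0) (u 2) with h02 | h02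
    · have := three_point_sorted h21 h32 h30 h02 h01 h2 l1 (by linarith); linarith
    · rcases le_total (u 1) (u 2) with h12 | h12
      · have := three_point_sorted h21 h32 h30 h02 h12 h0 l1 (by linarith); linarith
      · have := three_point_sorted h21 h32 h30 h01 h12 h0 l2 (by linarith); linarith

/-! ### Auxiliary spectral lemmas -/

private lemma psd_smul {n : ℕ} {P : Matrix (Fin n) (Fin n) ℂ} (hP : P.PosSemidef) {r : ℝ}
    (hr : 0 ≤ r) : ((r : ℂ) • P).PosSemidef := by
  constructor
  · unfold Matrix.IsHermitian
    rw [Matrix.conjTranspose_smul, hP.1.eq]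
    congr 1
    simp
  · intro x
    exact (hP.smul (Complex.zero_le_real.mpr hr)).2 x

private lemma trace_eq_sum_eig {n : ℕ} {A : Matrix (Fin n) (Fin n) ℂ} (hA : A.IsHermitian) :
    A.trace = ∑ i, (hA.eigenvalues i : ℂ) := by
  conv_lhs => rw [hA.spectral_theorem, Unitary.conjStarAlgAut_apply]
  rw [Matrix.trace_mul_cycle]
  rw [(Matrix.mem_unitaryGroup_iff'.mp (hA.eigenvectorUnitary).2)]
  rw [one_mul, Matrix.trace_diagonal]
  simp

private lemma sum_eig_one {n : ℕ} {A : Matrix (Fin n) (Fin n) ℂ} (hA : A.IsHermitian)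
    (htr : A.trace = 1) : ∑ i, hA.eigenvalues i = 1 := by
  have h := (trace_eq_sum_eig hA).symm.trans htr
  push_cast at h
  exact_mod_cast h

private lemma dot_self_eigvec {n : ℕ} {A : Matrix (Fin n) (Fin n) ℂ} (hA : A.IsHermitian)
    (i : Fin n) :
    dotProduct (star ⇑(hA.eigenvectorBasis i)) ⇑(hA.eigenvectorBasis i) = 1 := by
  have h := hA.eigenvectorBasis.orthonormal.1 i
  rw [dotProduct_comm, ← EuclideanSpace.inner_eq_star_dotProduct]
  simp [inner_self_eq_norm_sq_to_K, h]

private lemma eig_ge {n : ℕ} {A : Matrix (Fin n) (Fin n) ℂ} (hA : A.IsHermitian) {α : ℝ}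
    (h : (A - (α : ℂ) • 1).PosSemidef) (i : Fin n) : α ≤ hA.eigenvalues i := by
  have hv := hA.mulVec_eigenvectorBasis i
  have h2 := h.dotProduct_mulVec_nonneg ⇑(hA.eigenvectorBasis i)
  rw [Matrix.sub_mulVec, hv, Matrix.smul_mulVec, Matrix.one_mulVec] at h2
  rw [dotProduct_sub, dotProduct_smul, dotProduct_smul] at h2
  rw [dot_self_eigvec hA i] at h2
  have : (0:ℂ) ≤ ((hA.eigenvalues i : ℝ) : ℂ) - (α:ℂ) := by
    simpa [smul_eq_mul, Complex.real_smul] using h2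
  rw [← Complex.ofReal_sub, Complex.zero_le_real] at this
  linarith

private lemma eig_le {n : ℕ} {A : Matrix (Fin n) (Fin n) ℂ} (hA : A.IsHermitian) {α : ℝ}
    (h : ((α : ℂ) • 1 - A).PosSemidef) (i : Fin n) : hA.eigenvalues i ≤ α := by
  have hv := hA.mulVec_eigenvectorBasis i
  have h2 := h.dotProduct_mulVec_nonneg ⇑(hA.eigenvectorBasis i)
  rw [Matrix.sub_mulVec, hv, Matrix.smul_mulVec, Matrix.one_mulVec] at h2
  rw [dotProduct_sub, dotProduct_smul, dotProduct_smul] at h2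
  rw [dot_self_eigvec hA i] at h2
  have : (0:ℂ) ≤ (α:ℂ) - ((hA.eigenvalues i : ℝ) : ℂ) := by
    simpa [smul_eq_mul, Complex.real_smul] using h2
  rw [← Complex.ofReal_sub, Complex.zero_le_real] at this
  linarith

private lemma one_sub_psd {n : ℕ} {ρ : Matrix (Fin n) (Fin n) ℂ} (hρ : ρ.PosSemidef)
    (htr : ρ.trace = 1) : ((1 : Matrix (Fin n) (Fin n) ℂ) - ρ).PosSemidef := by
  have hH := hρ.1
  have hle : ∀ i, hH.eigenvalues i ≤ 1 := by
    intro i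
    have hs := sum_eig_one hH htr
    have : ∀ j ∈ Finset.univ, 0 ≤ hH.eigenvalues j := fun j _ => hρ.eigenvalues_nonneg j
    calc hH.eigenvalues i ≤ ∑ j, hH.eigenvalues j :=
      Finset.single_le_sum this (Finset.mem_univ i)
    _ = 1 := hs
  have hU : (hH.eigenvectorUnitary : Matrix (Fin n) (Fin n) ℂ) *
      (star (hH.eigenvectorUnitary : Matrix (Fin n) (Fin n) ℂ)) = 1 :=
    Matrix.mem_unitaryGroup_iff.mp (hH.eigenvectorUnitary).2
  have hdiag : Matrix.diagonal (fun i => ((1 - hH.eigenvalues i : ℝ) : ℂ)) =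
      1 - Matrix.diagonal (RCLike.ofReal ∘ hH.eigenvalues) := by
    ext i j
    by_cases h : i = j <;> simp [Matrix.diagonal, Matrix.one_apply, h]
  have key : (hH.eigenvectorUnitary : Matrix (Fin n) (Fin n) ℂ) *
      Matrix.diagonal (fun i => ((1 - hH.eigenvalues i : ℝ) : ℂ)) *
      (star (hH.eigenvectorUnitary : Matrix (Fin n) (Fin n) ℂ)) =
      (1 : Matrix (Fin n) (Fin n) ℂ) - ρ := by
    rw [hdiag, Matrix.mul_sub, mul_one, Matrix.sub_mul, hU]
    conv_rhs => rw [hH.spectral_theorem, Unitary.conjStarAlgAut_apply]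
  rw [← key]
  exact (Matrix.posSemidef_diagonal_iff.mpr fun i =>
    Complex.zero_le_real.mpr (by linarith [hle i])).mul_mul_conjTranspose_same _

private lemma pinching {n : ℕ} {A : Matrix (Fin n) (Fin n) ℂ} (hA : A.IsHermitian)
    (hpsd : A.PosSemidef) (d : Fin n → ℝ) (hd : ∀ i, A i i = (d i : ℂ)) :
    ∑ i, Real.negMulLog (hA.eigenvalues i) ≤ ∑ i, Real.negMulLog (d i) := by
  set U : Matrix (Fin n) (Fin n) ℂ := (hA.eigenvectorUnitary : Matrix (Fin n) (Fin n) ℂ) with hUdef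
  set w : Fin n → Fin n → ℝ := fun i k => Complex.normSq (U i k) with hw
  have hrow : ∀ i, ∑ k, w i k = 1 := by
    intro i
    have hU : U * star U = 1 := Matrix.mem_unitaryGroup_iff.mp (hA.eigenvectorUnitary).2
    have := congrFun (congrFun hU i) i
    rw [Matrix.mul_apply] at this
    simp only [Matrix.one_apply_eq] at this
    have : ∑ k, (U i k) * (starRingEnd ℂ) (U i k) = 1 := by
      simpa [Matrix.star_apply] using this
    have h2 : ((∑ k, w i k : ℝ) : ℂ) = 1 := by
      push_cast
      rw [← this]
      congr 1; funext k
      rw [hw]; simp [Complex.mul_conj]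
    exact_mod_cast h2
  have hcol : ∀ k, ∑ i, w i k = 1 := by
    intro k
    have hU : star U * U = 1 := Matrix.mem_unitaryGroup_iff'.mp (hA.eigenvectorUnitary).2
    have := congrFun (congrFun hU k) k
    rw [Matrix.mul_apply] at this
    simp only [Matrix.one_apply_eq] at this
    have h1 : ∑ i, (starRingEnd ℂ) (U i k) * (U i k) = 1 := by
      simpa [Matrix.star_apply] using this
    have h2 : ((∑ i, w i k : ℝ) : ℂ) = 1 := by
      push_cast
      rw [← h1]
      congr 1; funext i
      rw [hw]; rw [mul_comm]; simp [Complex.mul_conj]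
    exact_mod_cast h2
  have hdi : ∀ i, d i = ∑ k, w i k * hA.eigenvalues k := by
    intro i
    have h1 : A i i = ∑ k, ((w i k * hA.eigenvalues k : ℝ) : ℂ) := by
      conv_lhs => rw [hA.spectral_theorem, Unitary.conjStarAlgAut_apply]
      rw [Matrix.mul_apply]
      refine Finset.sum_congr rfl fun k _ => ?_
      rw [Matrix.mul_diagonal, Matrix.star_apply]
      push_cast
      rw [hw]
      simp only [Function.comp_apply]
      rw [Complex.normSq_eq_conj_mul_self]
      simp only [Complex.star_def]
      simp only [show (RCLike.ofReal : ℝ → ℂ) = Complex.ofReal from rfl, Function.comp_apply]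
      ring
    have := (hd i).symm.trans h1
    push_cast at this
    exact_mod_cast this
  have jensen : ∀ i, ∑ k, w i k * Real.negMulLog (hA.eigenvalues k) ≤ Real.negMulLog (d i) := by
    intro i
    have hj := Real.concaveOn_negMulLog.le_map_sum (t := (Finset.univ : Finset (Fin n)))
      (w := w i) (p := hA.eigenvalues) (fun k _ => Complex.normSq_nonneg _) (hrow i)
      (fun k _ => hpsd.eigenvalues_nonneg k)
    rw [hdi i]
    simpa [smul_eq_mul] using hj
  calc ∑ i, Real.negMulLog (hA.eigenvalues i)
      = ∑ i, ∑ k, w k i * Real.negMulLog (hA.eigenvalues i) := by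
        refine Finset.sum_congr rfl fun i _ => ?_
        rw [← Finset.sum_mul, hcol i, one_mul]
    _ = ∑ k, ∑ i, w k i * Real.negMulLog (hA.eigenvalues i) := Finset.sum_comm
    _ ≤ ∑ i, Real.negMulLog (d i) := Finset.sum_le_sum fun i _ => jensen i

/-! ### Structure of the channel -/

private def Smat : Matrix (Fin 3) (Fin 3) ℂ := !![0,0,1;0,-1,0;1,0,0]

private lemma SBS (B : Matrix (Fin 3) (Fin 3) ℂ) :
    Smat * B * Smat =
      !![B 2 2, -B 2 1, B 2 0; -B 1 2, B 1 1, -B 1 0; B 0 2, -B 0 1, B 0 0] := by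
  ext i j
  fin_cases i <;> fin_cases j <;>
    simp [Smat, Matrix.mul_apply, Matrix.vecMul, dotProduct, Matrix.vecHead,
      Matrix.vecTail, Fin.sum_univ_three]

private lemma Smat_mul_Smat : Smat * Smat = 1 := by
  ext i j
  fin_cases i <;> fin_cases j <;>
    simp [Smat, Matrix.one_apply, Matrix.mul_apply, Matrix.vecMul, dotProduct,
      Matrix.vecHead, Matrix.vecTail, Fin.sum_univ_three]

private lemma theta_psd {ρ : Matrix (Fin 3) (Fin 3) ℂ} (hρ : ρ.PosSemidef) :
    (Smat * ρᵀ * Smat).PosSemidef := by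
  have hS : Smatᴴ = Smat := by
    ext i j
    fin_cases i <;> fin_cases j <;>
      simp [Smat, Matrix.conjTranspose_apply, Matrix.vecHead, Matrix.vecTail]
  have := (hρ.transpose).mul_mul_conjTranspose_same Smat
  rwa [hS] at this

private lemma theta_one_sub {ρ : Matrix (Fin 3) (Fin 3) ℂ} :
    Smat * ((1 : Matrix (Fin 3) (Fin 3) ℂ) - ρ)ᵀ * Smat = 1 - Smat * ρᵀ * Smat := by
  rw [Matrix.transpose_sub, Matrix.transpose_one, Matrix.mul_sub, Matrix.sub_mul, mul_one,
    Smat_mul_Smat]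

private lemma one_sub_theta_psd {ρ : Matrix (Fin 3) (Fin 3) ℂ} (hρ : ρ.PosSemidef)
    (htr : ρ.trace = 1) : ((1 : Matrix (Fin 3) (Fin 3) ℂ) - Smat * ρᵀ * Smat).PosSemidef := by
  rw [← theta_one_sub]
  exact theta_psd (one_sub_psd hρ htr)

private lemma Nmap_eq (p q : ℝ) (ρ : Matrix (Fin 3) (Fin 3) ℂ) (htr : ρ.trace = 1) :
    Nmap p q ρ = ((1 - p - 6/5*q : ℝ) : ℂ) • ρ
      + ((3/10*q - 1/2*p : ℝ) : ℂ) • (Smat * ρᵀ * Smat)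
      + ((1/2*p + 3/10*q : ℝ) : ℂ) • (1 : Matrix (Fin 3) (Fin 3) ℂ) := by
  have h3 : ρ 0 0 + ρ 1 1 + ρ 2 2 = 1 := by
    rw [← Matrix.trace_fin_three ρ]; exact htr
  rw [SBS]
  ext i j
  fin_cases i <;> fin_cases j <;>
    · simp [Nmap, Phi2, Phi4, Matrix.one_apply, Matrix.transpose_apply]
      push_cast
      try ring
      try linear_combination ((1/2 : ℂ) * (p:ℂ) + (3/10 : ℂ) * (q:ℂ)) * h3

private lemma Nmap_trace (p q : ℝ) (ρ : Matrix (Fin 3) (Fin 3) ℂ) :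
    (Nmap p q ρ).trace = ρ.trace := by
  simp [Nmap, Phi2, Phi4, Matrix.trace_fin_three]
  push_cast
  ring

private lemma NE00 (p q : ℝ) :
    Nmap p q (Matrix.single 0 0 1) =
      Matrix.diagonal
        (fun i => ((![1 - 1/2*p - 9/10*q, 1/2*p + 3/10*q, 3/5*q] : Fin 3 → ℝ) i : ℂ)) := by
  ext i j
  fin_cases i <;> fin_cases j <;>
    · simp [Nmap, Phi2, Phi4, Matrix.single, Matrix.diagonal, Matrix.vecHead,
        Matrix.vecTail, Matrix.smul_apply, Matrix.of_apply]
      try push_cast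
      try ring

private lemma NE11 (p q : ℝ) :
    Nmap p q (Matrix.single 1 1 1) =
      Matrix.diagonal
        (fun i => ((![1/2*p + 3/10*q, 1 - p - 3/5*q, 1/2*p + 3/10*q] : Fin 3 → ℝ) i : ℂ)) := by
  ext i j
  fin_cases i <;> fin_cases j <;>
    · simp [Nmap, Phi2, Phi4, Matrix.single, Matrix.diagonal, Matrix.vecHead,
        Matrix.vecTail, Matrix.smul_apply, Matrix.of_apply]
      try push_cast
      try ring

/-! ### The two main estimates -/

private lemma herm_real_smul_one (r : ℝ) :
    (((r : ℝ) : ℂ) • (1 : Matrix (Fin 3) (Fin 3) ℂ)).IsHermitian := by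
  unfold Matrix.IsHermitian
  rw [Matrix.conjTranspose_smul, Matrix.conjTranspose_one]
  congr 1
  simp

private lemma ent_diag {A : Matrix (Fin 3) (Fin 3) ℂ} (d : Fin 3 → ℝ) (hd0 : ∀ i, 0 ≤ d i)
    (hA : A = Matrix.diagonal (fun i => (d i : ℂ))) :
    vnEntropy A ≤ ∑ i, Real.negMulLog (d i) := by
  subst hA
  have hpsd : (Matrix.diagonal (fun i => (d i : ℂ))).PosSemidef :=
    Matrix.posSemidef_diagonal_iff.mpr fun i => Complex.zero_le_real.mpr (hd0 i)
  have hH := hpsd.1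
  unfold vnEntropy
  rw [dif_pos hH]
  have hsum : -∑ i, hH.eigenvalues i * Real.log (hH.eigenvalues i) =
      ∑ i, Real.negMulLog (hH.eigenvalues i) := by
    rw [← Finset.sum_neg_distrib]
    exact Finset.sum_congr rfl fun i _ => by simp [Real.negMulLog]
  rw [hsum]
  exact pinching hH hpsd d fun i => by simp [Matrix.diagonal_apply_eq]

private lemma main_bound (p q : ℝ) {ρ : Matrix (Fin 3) (Fin 3) ℂ}
    (hρ : ρ.PosSemidef) (htr : ρ.trace = 1)
    {v1 v2 v3 : ℝ} (h21 : v2 ≤ v1) (h32 : v3 ≤ v2) (h30 : 0 ≤ v3) (hsum : v1 + v2 + v3 = 1)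
    (hup : (((v1 : ℝ) : ℂ) • 1 - Nmap p q ρ).PosSemidef)
    (hlo : (Nmap p q ρ - ((v3 : ℝ) : ℂ) • 1).PosSemidef) :
    Real.negMulLog v1 + Real.negMulLog v2 + Real.negMulLog v3 ≤ vnEntropy (Nmap p q ρ) := by
  have hH : (Nmap p q ρ).IsHermitian := by
    have h1 : Nmap p q ρ = (((v1 : ℝ) : ℂ) • 1) - ((((v1 : ℝ) : ℂ) • 1) - Nmap p q ρ) :=
      (sub_sub_cancel _ _).symm
    rw [h1]
    exact (herm_real_smul_one v1).sub hup.1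
  unfold vnEntropy
  rw [dif_pos hH]
  have hsum' : -∑ i, hH.eigenvalues i * Real.log (hH.eigenvalues i) =
      ∑ i, Real.negMulLog (hH.eigenvalues i) := by
    rw [← Finset.sum_neg_distrib]
    exact Finset.sum_congr rfl fun i _ => by simp [Real.negMulLog]
  rw [hsum']
  refine three_point _ h21 h32 h30 (fun i => eig_le hH hup i) (fun i => eig_ge hH hlo i) ?_
  rw [sum_eig_one hH (by rw [Nmap_trace, htr])]
  linarith

/-! ### Main theorem -/

/-- for `p, q ≥ 0` with `p + q ≤ 1`, the minimum output entropy of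
`N_{p,q}` is attained at `E₀₀` when `(5p-3q)(5p+6q-5) ≤ 0`, and at `E₁₁` when
`(5p-3q)(5p+6q-5) ≥ 0`. -/
theorem stmt_13 (p q : ℝ) (hp : 0 ≤ p) (hq : 0 ≤ q) (hpq : p + q ≤ 1) :
    ((5 * p - 3 * q) * (5 * p + 6 * q - 5) ≤ 0 →
      ∀ ρ : Matrix (Fin 3) (Fin 3) ℂ, ρ.PosSemidef → ρ.trace = 1 →
        vnEntropy (Nmap p q (Matrix.single 0 0 1)) ≤ vnEntropy (Nmap p q ρ)) ∧
    (0 ≤ (5 * p - 3 * q) * (5 * p + 6 * q - 5) →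
      ∀ ρ : Matrix (Fin 3) (Fin 3) ℂ, ρ.PosSemidef → ρ.trace = 1 →
        vnEntropy (Nmap p q (Matrix.single 1 1 1)) ≤ vnEntropy (Nmap p q ρ)) := by
  set a : ℝ := 1 - p - 6/5*q with ha
  set b : ℝ := 3/10*q - 1/2*p with hb
  set c : ℝ := 1/2*p + 3/10*q with hc
  constructor
  · -- minimizer E₀₀
    intro hs ρ hρ htr
    have hE : vnEntropy (Nmap p q (Matrix.single 0 0 1)) ≤
        Real.negMulLog (a + c) + Real.negMulLog c + Real.negMulLog (b + c) := by
      have h0 : ∀ i, 0 ≤ (![1 - 1/2*p - 9/10*q, 1/2*p + 3/10*q, 3/5*q] : Fin 3 → ℝ) i := by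
        intro i
        fin_cases i <;> · simp; try linarith
      have := ent_diag _ h0 (NE00 p q)
      rw [Fin.sum_univ_three] at this
      have e1 : (![1 - 1/2*p - 9/10*q, 1/2*p + 3/10*q, 3/5*q] : Fin 3 → ℝ) 0 = a + c := by
        simp [ha, hc]; ring
      have e2 : (![1 - 1/2*p - 9/10*q, 1/2*p + 3/10*q, 3/5*q] : Fin 3 → ℝ) 1 = c := by
        simp [hc]
      have e3 : (![1 - 1/2*p - 9/10*q, 1/2*p + 3/10*q, 3/5*q] : Fin 3 → ℝ) 2 = b + c := by
        simp [hb, hc]; ring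
      rw [e1, e2, e3] at this
      exact this
    rcases mul_nonpos_iff.mp hs with ⟨h1, h2⟩ | ⟨h1, h2⟩
    · -- 5p ≥ 3q and 5p + 6q ≤ 5 : a ≥ 0 ≥ b
      have ha0 : 0 ≤ a := by rw [ha]; linarith
      have hb0 : b ≤ 0 := by rw [hb]; linarith
      have hup : (((a + c : ℝ) : ℂ) • 1 - Nmap p q ρ).PosSemidef := by
        have e : (((a + c : ℝ) : ℂ) • 1 - Nmap p q ρ) =
            ((a : ℝ) : ℂ) • ((1 : Matrix (Fin 3) (Fin 3) ℂ) - ρ)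
              + (((-b : ℝ)) : ℂ) • (Smat * ρᵀ * Smat) := by
          rw [Nmap_eq p q ρ htr, ha, hb, hc]
          push_cast
          module
        rw [e]
        exact (psd_smul (one_sub_psd hρ htr) ha0).add (psd_smul (theta_psd hρ) (by linarith))
      have hlo : (Nmap p q ρ - ((b + c : ℝ) : ℂ) • 1).PosSemidef := by
        have e : (Nmap p q ρ - ((b + c : ℝ) : ℂ) • 1) =
            ((a : ℝ) : ℂ) • ρ
              + (((-b : ℝ)) : ℂ) • ((1 : Matrix (Fin 3) (Fin 3) ℂ) - Smat * ρᵀ * Smat) := by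
          rw [Nmap_eq p q ρ htr, ha, hb, hc]
          push_cast
          module
        rw [e]
        exact (psd_smul hρ ha0).add (psd_smul (one_sub_theta_psd hρ htr) (by linarith))
      have key := main_bound p q hρ htr (v1 := a + c) (v2 := c) (v3 := b + c)
        (by linarith) (by linarith) (by rw [hb, hc]; linarith)
        (by rw [ha, hb, hc]; ring) hup hlo
      linarith
    · -- 5p ≤ 3q and 5p + 6q ≥ 5 : b ≥ 0 ≥ a
      have ha0 : a ≤ 0 := by rw [ha]; linarith
      have hb0 : 0 ≤ b := by rw [hb]; linarith
      have hup : (((b + c : ℝ) : ℂ) • 1 - Nmap p q ρ).PosSemidef := by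
        have e : (((b + c : ℝ) : ℂ) • 1 - Nmap p q ρ) =
            (((-a : ℝ)) : ℂ) • ρ
              + ((b : ℝ) : ℂ) • ((1 : Matrix (Fin 3) (Fin 3) ℂ) - Smat * ρᵀ * Smat) := by
          rw [Nmap_eq p q ρ htr, ha, hb, hc]
          push_cast
          module
        rw [e]
        exact (psd_smul hρ (by linarith)).add (psd_smul (one_sub_theta_psd hρ htr) hb0)
      have hlo : (Nmap p q ρ - ((a + c : ℝ) : ℂ) • 1).PosSemidef := by
        have e : (Nmap p q ρ - ((a + c : ℝ) : ℂ) • 1) =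
            (((-a : ℝ)) : ℂ) • ((1 : Matrix (Fin 3) (Fin 3) ℂ) - ρ)
              + ((b : ℝ) : ℂ) • (Smat * ρᵀ * Smat) := by
          rw [Nmap_eq p q ρ htr, ha, hb, hc]
          push_cast
          module
        rw [e]
        exact (psd_smul (one_sub_psd hρ htr) (by linarith)).add (psd_smul (theta_psd hρ) hb0)
      have key := main_bound p q hρ htr (v1 := b + c) (v2 := c) (v3 := a + c)
        (by linarith) (by linarith) (by rw [ha, hc]; linarith)
        (by rw [ha, hb, hc]; ring) hup hlo
      linarith
  · -- minimizer E₁₁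
    intro hs ρ hρ htr
    have hE : vnEntropy (Nmap p q (Matrix.single 1 1 1)) ≤
        Real.negMulLog c + Real.negMulLog (a + b + c) + Real.negMulLog c := by
      have h0 : ∀ i, 0 ≤ (![1/2*p + 3/10*q, 1 - p - 3/5*q, 1/2*p + 3/10*q] : Fin 3 → ℝ) i := by
        intro i
        fin_cases i <;> · simp; try linarith
      have := ent_diag _ h0 (NE11 p q)
      rw [Fin.sum_univ_three] at this
      have e1 : (![1/2*p + 3/10*q, 1 - p - 3/5*q, 1/2*p + 3/10*q] : Fin 3 → ℝ) 0 = c := by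
        simp [hc]
      have e2 : (![1/2*p + 3/10*q, 1 - p - 3/5*q, 1/2*p + 3/10*q] : Fin 3 → ℝ) 1 = a + b + c := by
        simp [ha, hb, hc]; ring
      have e3 : (![1/2*p + 3/10*q, 1 - p - 3/5*q, 1/2*p + 3/10*q] : Fin 3 → ℝ) 2 = c := by
        simp [hc]
      rw [e1, e2, e3] at this
      exact this
    rcases mul_nonneg_iff.mp hs with ⟨h1, h2⟩ | ⟨h1, h2⟩
    · -- 5p ≥ 3q and 5p + 6q ≥ 5 : a ≤ 0, b ≤ 0
      have ha0 : a ≤ 0 := by rw [ha]; linarith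
      have hb0 : b ≤ 0 := by rw [hb]; linarith
      have hup : (((c : ℝ) : ℂ) • 1 - Nmap p q ρ).PosSemidef := by
        have e : (((c : ℝ) : ℂ) • 1 - Nmap p q ρ) =
            (((-a : ℝ)) : ℂ) • ρ + (((-b : ℝ)) : ℂ) • (Smat * ρᵀ * Smat) := by
          rw [Nmap_eq p q ρ htr, ha, hb, hc]
          push_cast
          module
        rw [e]
        exact (psd_smul hρ (by linarith)).add (psd_smul (theta_psd hρ) (by linarith))
      have hlo : (Nmap p q ρ - ((a + b + c : ℝ) : ℂ) • 1).PosSemidef := by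
        have e : (Nmap p q ρ - ((a + b + c : ℝ) : ℂ) • 1) =
            (((-a : ℝ)) : ℂ) • ((1 : Matrix (Fin 3) (Fin 3) ℂ) - ρ)
              + (((-b : ℝ)) : ℂ) • ((1 : Matrix (Fin 3) (Fin 3) ℂ) - Smat * ρᵀ * Smat) := by
          rw [Nmap_eq p q ρ htr, ha, hb, hc]
          push_cast
          module
        rw [e]
        exact (psd_smul (one_sub_psd hρ htr) (by linarith)).add
          (psd_smul (one_sub_theta_psd hρ htr) (by linarith))
      have key := main_bound p q hρ htr (v1 := c) (v2 := c) (v3 := a + b + c)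
        (le_refl c) (by linarith) (by rw [ha, hb, hc]; linarith)
        (by rw [ha, hb, hc]; ring) hup hlo
      linarith
    · -- 5p ≤ 3q and 5p + 6q ≤ 5 : a ≥ 0, b ≥ 0
      have ha0 : 0 ≤ a := by rw [ha]; linarith
      have hb0 : 0 ≤ b := by rw [hb]; linarith
      have hup : (((a + b + c : ℝ) : ℂ) • 1 - Nmap p q ρ).PosSemidef := by
        have e : (((a + b + c : ℝ) : ℂ) • 1 - Nmap p q ρ) =
            ((a : ℝ) : ℂ) • ((1 : Matrix (Fin 3) (Fin 3) ℂ) - ρ)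
              + ((b : ℝ) : ℂ) • ((1 : Matrix (Fin 3) (Fin 3) ℂ) - Smat * ρᵀ * Smat) := by
          rw [Nmap_eq p q ρ htr, ha, hb, hc]
          push_cast
          module
        rw [e]
        exact (psd_smul (one_sub_psd hρ htr) ha0).add
          (psd_smul (one_sub_theta_psd hρ htr) hb0)
      have hlo : (Nmap p q ρ - ((c : ℝ) : ℂ) • 1).PosSemidef := by
        have e : (Nmap p q ρ - ((c : ℝ) : ℂ) • 1) =
            ((a : ℝ) : ℂ) • ρ + ((b : ℝ) : ℂ) • (Smat * ρᵀ * Smat) := by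
          rw [Nmap_eq p q ρ htr, ha, hb, hc]
          push_cast
          module
        rw [e]
        exact (psd_smul hρ ha0).add (psd_smul (theta_psd hρ) hb0)
      have key := main_bound p q hρ htr (v1 := a + b + c) (v2 := c) (v3 := c)
        (by linarith) (le_refl c) (by rw [hc]; linarith)
        (by rw [ha, hb, hc]; ring) hup hlo
      linarith

end
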